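/- Let M be an n×n Hermitian matrix, 1 ≤ k ≤ n, and let A be a uniformly random k×k principal submatrix of M (obtained as the submatrix indexed by π(1),...,π(k) for π uniform on S_n). Let F(x) = E[F_A(x)]. Then for every fixed x ∈ ℝ and r ≥ 0, P(|F_A(x) − F(x)| ≥ r) ≤ 6·exp(−r√k/√8). -/

import Mathlib

open scoped Classical
open Matrix Finset

/-- Empirical spectral distribution function of a Hermitian matrix. -/
noncomputable def esd {m : Type*} [Fintype m] [DecidableEq m] {A : Matrix m m ℂ}
    (hA : A.IsHermitian) (x : ℝ) : ℝ :=
  ((Finset.univ.filter fun i => hA.eigenvalues i ≤ x).card : ℝ) / Fintype.card m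

/-- ESD at `x` of the principal submatrix of `M` indexed by `p 1, …, p k`. -/
noncomputable def fESD {n k : ℕ} (hk : k ≤ n) (M : Matrix (Fin n) (Fin n) ℂ)
    (hM : M.IsHermitian) (p : Equiv.Perm (Fin n)) (x : ℝ) : ℝ :=
  esd (hM.submatrix (fun a : Fin k => p (Fin.castLE hk a))) x

/-- `F(x) = E[F_A(x)]` for a uniformly random `k × k` principal submatrix. -/
noncomputable def meanESD {n k : ℕ} (hk : k ≤ n) (M : Matrix (Fin n) (Fin n) ℂ)
    (hM : M.IsHermitian) (x : ℝ) : ℝ :=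
  (∑ p : Equiv.Perm (Fin n), fESD hk M hM p x) / Fintype.card (Equiv.Perm (Fin n))

/-!
Write `G u = F_{M[u, u]}(x)` for an injection `u : Fin k ↪ Fin n`. The restriction of a uniform
permutation to `Fin k` is a uniform injection, so the claim is a tail bound for `G` under the
uniform measure on injections.

Composing `u` with a transposition changes at most two rows and columns of `M[u, u]`. If `A` and
`A'` agree outside the rows and columns in `s`, then `#{λ' ≤ x} ≤ #{λ ≤ x} + #s`: otherwise the
span of the eigenvectors of `A'` with eigenvalue `≤ x`, the span of those of `A` with eigenvalue
`> x` and the vectors vanishing on `s` would meet in some `v ≠ 0`, on which the two quadratic forms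
agree although `⟪v, A' v⟫ ≤ x ‖v‖² < ⟪v, A v⟫`. Hence `G` moves by at most `c = 2 / k` under a
transposition.

Revealing the values of `u` one at a time gives a Doob martingale. Two extensions of the revealed
values differ by a transposition, so by Hoeffding's lemma every step has conditional moment
generating function at most `exp (c² t² / 8)`, whence `E exp (t (G - E G)) ≤ exp (k c² t² / 8)`.
Chernoff's bound at `t = √k / √8` gives `2 exp (1 / 16 - r √k / √8) ≤ 6 exp (-r √k / √8)`.
-/

open scoped NNReal BigOperators
open Real

theorem Submodule.finrank_add_finrank_le_finrank_inf_add {K V : Type*} [DivisionRing K]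
    [AddCommGroup V] [Module K V] [FiniteDimensional K V] (s t : Submodule K V) :
    Module.finrank K s + Module.finrank K t ≤ Module.finrank K ↥(s ⊓ t) + Module.finrank K V := by
  rw [← Submodule.finrank_sup_add_finrank_inf_eq, add_comm]
  exact Nat.add_le_add_left (Submodule.finrank_le _) _

namespace OrthonormalBasis

variable {ι 𝕜 E : Type*} [Fintype ι] [RCLike 𝕜] [NormedAddCommGroup E] [InnerProductSpace 𝕜 E]
  (b : OrthonormalBasis ι 𝕜 E)

theorem repr_apply_eq_zero_of_mem_span_image {t : Set ι} {v : E}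
    (hv : v ∈ Submodule.span 𝕜 (b '' t)) {i : ι} (hi : i ∉ t) : b.repr v i = 0 := by
  rw [b.repr_apply_apply]
  induction hv using Submodule.span_induction with
  | mem w hw =>
    obtain ⟨j, hj, rfl⟩ := hw
    exact b.orthonormal.2 fun h => hi (h ▸ hj)
  | zero => simp
  | add y z _ _ hy hz => rw [inner_add_right, hy, hz, add_zero]
  | smul a y _ hy => rw [inner_smul_right, hy, mul_zero]

theorem finrank_span_image (t : Finset ι) :
    Module.finrank 𝕜 (Submodule.span 𝕜 (b '' t)) = #t := by
  rw [finrank_span_set_eq_card (b.orthonormal.linearIndependent.linearIndepOn _ |>.id_image),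
    Set.toFinset_card, Set.card_image_of_injective _ b.orthonormal.linearIndependent.injective]
  simp

theorem norm_sq_eq_sum (v : E) : ‖v‖ ^ 2 = ∑ i, ‖b.repr v i‖ ^ 2 := by
  rw [← b.repr.norm_map, EuclideanSpace.norm_sq_eq]

theorem re_inner_self_apply_eq_sum (T : E →ₗ[𝕜] E) (μ : ι → ℝ)
    (hT : ∀ i, T (b i) = (μ i : 𝕜) • b i) (v : E) :
    RCLike.re (inner 𝕜 v (T v)) = ∑ i, μ i * ‖b.repr v i‖ ^ 2 := by
  have hrepr (i : ι) : b.repr (T v) i = μ i * b.repr v i := by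
    conv_lhs => rw [← b.sum_repr v]
    simp [map_sum, hT, b.repr_self, Pi.single_apply, RCLike.real_smul_eq_coe_mul, mul_comm]
  rw [← b.repr.inner_map_map, PiLp.inner_apply, map_sum]
  refine Finset.sum_congr rfl fun i _ => ?_
  rw [hrepr, RCLike.inner_apply, mul_assoc, RCLike.mul_conj, ← RCLike.ofReal_pow,
    ← RCLike.ofReal_mul, RCLike.ofReal_re]

variable {T : E →ₗ[𝕜] E} {μ : ι → ℝ} (hT : ∀ i, T (b i) = (μ i : 𝕜) • b i) {t : Set ι} {v : E}
include hT

theorem re_inner_self_apply_le_of_mem_span (hv : v ∈ Submodule.span 𝕜 (b '' t)) {x : ℝ}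
    (hμ : ∀ i ∈ t, μ i ≤ x) : RCLike.re (inner 𝕜 v (T v)) ≤ x * ‖v‖ ^ 2 := by
  rw [b.re_inner_self_apply_eq_sum T μ hT, b.norm_sq_eq_sum, Finset.mul_sum]
  refine Finset.sum_le_sum fun i _ => ?_
  by_cases hi : i ∈ t
  · exact mul_le_mul_of_nonneg_right (hμ i hi) (by positivity)
  · simp [b.repr_apply_eq_zero_of_mem_span_image hv hi]

theorem lt_re_inner_self_apply_of_mem_span (hv : v ∈ Submodule.span 𝕜 (b '' t)) (hv0 : v ≠ 0)
    {x : ℝ} (hμ : ∀ i ∈ t, x < μ i) : x * ‖v‖ ^ 2 < RCLike.re (inner 𝕜 v (T v)) := by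
  rw [b.re_inner_self_apply_eq_sum T μ hT, b.norm_sq_eq_sum, Finset.mul_sum]
  obtain ⟨j, hj⟩ : ∃ j, b.repr v j ≠ 0 := by
    by_contra! h
    exact hv0 (b.repr.injective (by ext i; simp [h i]))
  have hjt : j ∈ t := by
    by_contra hjt
    exact hj (b.repr_apply_eq_zero_of_mem_span_image hv hjt)
  refine Finset.sum_lt_sum (fun i _ => ?_) ⟨j, mem_univ j, ?_⟩
  · by_cases hi : i ∈ t
    · exact mul_le_mul_of_nonneg_right (hμ i hi).le (by positivity)
    · simp [b.repr_apply_eq_zero_of_mem_span_image hv hi]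
  · exact mul_lt_mul_of_pos_right (hμ j hjt) (by positivity)

end OrthonormalBasis

namespace Matrix

variable {m 𝕜 : Type*} [Fintype m] [DecidableEq m] [RCLike 𝕜]

theorem IsHermitian.toEuclideanLin_eigenvectorBasis {A : Matrix m m 𝕜} (hA : A.IsHermitian)
    (i : m) : toEuclideanLin A (hA.eigenvectorBasis i) =
      (hA.eigenvalues i : 𝕜) • hA.eigenvectorBasis i := by
  ext j
  simp [toLpLin_apply, hA.mulVec_eigenvectorBasis i]

theorem inner_toEuclideanLin_eq_of_eq_of_notMem {A A' : Matrix m m 𝕜} {s : Finset m}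
    (hAA' : ∀ i j, i ∉ s → j ∉ s → A i j = A' i j) {v : EuclideanSpace 𝕜 m}
    (hv : ∀ i ∈ s, v i = 0) :
    inner 𝕜 v (toEuclideanLin A v) = inner 𝕜 v (toEuclideanLin A' v) := by
  simp only [toLpLin_apply, PiLp.inner_apply]
  refine Finset.sum_congr rfl fun i _ => ?_
  by_cases hi : i ∈ s
  · simp [hv i hi]
  · congr 1
    simp only [mulVec, dotProduct]
    refine Finset.sum_congr rfl fun j _ => ?_
    by_cases hj : j ∈ s
    · simp [hv j hj]
    · rw [hAA' i j hi hj]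

theorem IsHermitian.card_eigenvalues_le_le_add {A A' : Matrix m m 𝕜} (hA : A.IsHermitian)
    (hA' : A'.IsHermitian) {s : Finset m} (hAA' : ∀ i j, i ∉ s → j ∉ s → A i j = A' i j)
    (x : ℝ) : #{i | hA'.eigenvalues i ≤ x} ≤ #{i | hA.eigenvalues i ≤ x} + #s := by
  by_contra! hlt
  set V := Submodule.span 𝕜 (hA'.eigenvectorBasis '' ↑({i | hA'.eigenvalues i ≤ x} : Finset m))
  set U := Submodule.span 𝕜 (hA.eigenvectorBasis '' ↑({i | x < hA.eigenvalues i} : Finset m))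
  set W := Submodule.span 𝕜 (EuclideanSpace.basisFun m 𝕜 '' ↑(sᶜ : Finset m))
  have hcard : #{i | hA.eigenvalues i ≤ x} + #{i | x < hA.eigenvalues i} = Fintype.card m := by
    simpa [not_le] using
      Finset.card_filter_add_card_filter_not (s := univ) (fun i => hA.eigenvalues i ≤ x)
  have hdim : 2 * Module.finrank 𝕜 (EuclideanSpace 𝕜 m) <
      Module.finrank 𝕜 V + Module.finrank 𝕜 U + Module.finrank 𝕜 W := by
    simp only [V, U, W, OrthonormalBasis.finrank_span_image, finrank_euclideanSpace, card_compl]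
    omega
  obtain ⟨v, ⟨⟨hvV, hvU⟩, hvW⟩, hv0⟩ : ∃ v ∈ V ⊓ U ⊓ W, v ≠ 0 := by
    have hVU := Submodule.finrank_add_finrank_le_finrank_inf_add V U
    have hVUW := Submodule.finrank_add_finrank_le_finrank_inf_add (V ⊓ U) W
    refine Submodule.exists_mem_ne_zero_of_ne_bot fun h => ?_
    rw [← Submodule.finrank_eq_zero] at h
    omega
  have hv_s : ∀ i ∈ s, v i = 0 := fun i hi =>
    (EuclideanSpace.basisFun m 𝕜).repr_apply_eq_zero_of_mem_span_image hvW (by simpa using hi)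
  have hle := hA'.eigenvectorBasis.re_inner_self_apply_le_of_mem_span
    hA'.toEuclideanLin_eigenvectorBasis hvV (x := x) (by simp)
  have hgt := hA.eigenvectorBasis.lt_re_inner_self_apply_of_mem_span
    hA.toEuclideanLin_eigenvectorBasis hvU hv0 (x := x) (by simp)
  rw [inner_toEuclideanLin_eq_of_eq_of_notMem hAA' hv_s] at hgt
  linarith

end Matrix

theorem abs_esd_sub_esd_le {m : Type*} [Fintype m] [DecidableEq m] {A A' : Matrix m m ℂ}
    (hA : A.IsHermitian) (hA' : A'.IsHermitian) {s : Finset m}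
    (hAA' : ∀ i j, i ∉ s → j ∉ s → A i j = A' i j) (x : ℝ) :
    |esd hA' x - esd hA x| ≤ #s / Fintype.card m := by
  have h₁ : (#{i | hA'.eigenvalues i ≤ x} : ℝ) ≤ #{i | hA.eigenvalues i ≤ x} + #s := by
    exact_mod_cast hA.card_eigenvalues_le_le_add hA' hAA' x
  have h₂ : (#{i | hA.eigenvalues i ≤ x} : ℝ) ≤ #{i | hA'.eigenvalues i ≤ x} + #s := by
    exact_mod_cast hA'.card_eigenvalues_le_le_add hA (fun i j hi hj => (hAA' i j hi hj).symm) x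
  rw [esd, esd, ← sub_div, abs_div, Nat.abs_cast]
  gcongr
  exact abs_sub_le_iff.2 ⟨by linarith, by linarith⟩

theorem Fintype.expect_sigma_of_card_eq {ι : Type*} {κ : ι → Type*} [Fintype ι]
    [∀ i, Fintype (κ i)] {K : Type*} [Semifield K] [CharZero K] {m : ℕ}
    (hκ : ∀ i, Fintype.card (κ i) = m) (F : Sigma κ → K) :
    𝔼 x, F x = 𝔼 i, 𝔼 j, F ⟨i, j⟩ := by
  simp only [Fintype.expect_eq_sum_div_card, hκ, Fintype.card_sigma, sum_const, card_univ,
    smul_eq_mul, ← Finset.sum_div, div_div, Nat.cast_mul]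
  rw [← Finset.univ_sigma_univ, Finset.sum_sigma, mul_comm]

theorem Fintype.card_filter_div_card_eq_expect {α K : Type*} [Fintype α] [Semifield K]
    [CharZero K] (p : α → Prop) [DecidablePred p] :
    (#{a | p a} : K) / Fintype.card α = 𝔼 a, if p a then 1 else 0 := by
  rw [Fintype.expect_eq_sum_div_card, Finset.sum_boole]

theorem MulAction.expect_smul_eq_expect {G X K : Type*} [Group G] [Fintype G] [MulAction G X]
    [Fintype X] [IsPretransitive G X] [Semifield K] [CharZero K] (x₀ : X) (F : X → K) :
    𝔼 g : G, F (g • x₀) = 𝔼 x, F x := by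
  have : Nonempty X := ⟨x₀⟩
  have h_orbit (x : X) : 𝔼 g : G, F (g • x) = 𝔼 g : G, F (g • x₀) := by
    obtain ⟨h, rfl⟩ := exists_smul_eq G x₀ x
    simp_rw [smul_smul]
    exact Fintype.expect_equiv (Equiv.mulRight h) _ _ fun _ => rfl
  calc 𝔼 g : G, F (g • x₀) = 𝔼 x, 𝔼 g : G, F (g • x) := by simp [h_orbit]
    _ = 𝔼 g : G, 𝔼 x, F (g • x) := Finset.expect_comm _ _ _
    _ = 𝔼 _g : G, 𝔼 x, F x := by
      congr! 1 with g
      exact Fintype.expect_equiv (MulAction.toPerm g) _ F fun _ => rfl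
    _ = 𝔼 x, F x := Fintype.expect_const _

theorem MulAction.card_filter_smul_div_card_eq {G X K : Type*} [Group G] [Fintype G]
    [MulAction G X] [Fintype X] [IsPretransitive G X] [Semifield K] [CharZero K] (x₀ : X)
    (p : X → Prop) [DecidablePred p] :
    (#{g : G | p (g • x₀)} : K) / Fintype.card G = #{x | p x} / Fintype.card X := by
  rw [Fintype.card_filter_div_card_eq_expect, Fintype.card_filter_div_card_eq_expect]
  exact MulAction.expect_smul_eq_expect (K := K) x₀ fun x => if p x then 1 else 0

open MeasureTheory ProbabilityTheory in
theorem expect_exp_mul_sub_expect_le {β : Type*} [Fintype β] (y : β → ℝ) {c : ℝ}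
    (hy : ∀ a b, y a - y b ≤ c) (t : ℝ) :
    𝔼 a, exp (t * (y a - 𝔼 b, y b)) ≤ exp (c ^ 2 * t ^ 2 / 8) := by
  rcases isEmpty_or_nonempty β with hβ | hβ
  · simp only [univ_eq_empty, expect_empty]; positivity
  obtain ⟨a₀, -, ha₀⟩ := exists_min_image univ y univ_nonempty
  let _ : MeasurableSpace β := ⊤
  set μ : Measure β := (PMF.uniformOfFintype β).toMeasure
  have hμ (f : β → ℝ) : ∫ a, f a ∂μ = 𝔼 a, f a := by
    simp [μ, PMF.integral_eq_sum, Fintype.expect_eq_sum_div_card, div_eq_inv_mul, Finset.mul_sum]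
  have hsub := (hasSubgaussianMGF_of_mem_Icc (μ := μ) (X := y) (a := y a₀) (b := y a₀ + c)
    (Measurable.of_discrete).aemeasurable
    (ae_of_all _ fun a => ⟨ha₀ a (mem_univ a), by linarith [hy a a₀]⟩)).mgf_le t
  simp only [mgf, hμ] at hsub
  refine hsub.trans_eq ?_
  congr 1
  simp only [add_sub_cancel_left, NNReal.coe_pow, NNReal.coe_div, coe_nnnorm, norm_eq_abs,
    NNReal.coe_ofNat, div_pow, sq_abs]
  ring

theorem ite_le_abs_le_exp_add_exp {θ : ℝ} (hθ : 0 ≤ θ) (r z : ℝ) :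
    (if r ≤ |z| then 1 else 0 : ℝ) ≤ exp (-(θ * r)) * (exp (θ * z) + exp (-θ * z)) := by
  split_ifs with h
  · have h_one : 1 ≤ exp (-(θ * r)) * exp (θ * |z|) := by
      rw [← exp_add, Real.one_le_exp_iff]
      nlinarith
    refine h_one.trans (mul_le_mul_of_nonneg_left ?_ (exp_nonneg _))
    rcases abs_cases z with ⟨hz, -⟩ | ⟨hz, -⟩ <;> rw [hz]
    · exact le_add_of_nonneg_right (exp_nonneg _)
    · rw [mul_neg, ← neg_mul]
      exact le_add_of_nonneg_left (exp_nonneg _)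
  · positivity

namespace Function.Embedding

variable {α β : Type*}

theorem optionElim_eq_swap_smul [DecidableEq β] {f : α ↪ β} {b b' : β} (hb : b ∉ Set.range f)
    (hb' : b' ∉ Set.range f) : f.optionElim b' hb' = Equiv.swap b b' • f.optionElim b hb := by
  ext (_ | i)
  · simp
  · have hi : f i ≠ b := fun h => hb ⟨i, h⟩
    have hi' : f i ≠ b' := fun h => hb' ⟨i, h⟩
    simp [Equiv.swap_apply_of_ne_of_ne hi hi']

theorem smul_optionElim (σ : Equiv.Perm β) {f : α ↪ β} {b : β} (hb : b ∉ Set.range f) :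
    σ • f.optionElim b hb =
      (σ • f).optionElim (σ b) (by simpa [Function.Embedding.coe_smul] using hb) := by
  ext (_ | i) <;> rfl

end Function.Embedding

def SwapLipschitzWith {ι β : Type*} [DecidableEq β] (c : ℝ≥0) (G : (ι ↪ β) → ℝ) : Prop :=
  ∀ (u : ι ↪ β) (a b : β), |G (Equiv.swap a b • u) - G u| ≤ c

theorem SwapLipschitzWith.sub_optionElim_le {α β : Type*} [DecidableEq β] {c : ℝ≥0}
    {G : (Option α ↪ β) → ℝ} (hG : SwapLipschitzWith c G) (f : α ↪ β)
    (b b' : ↥(Set.range f)ᶜ) : G (f.optionElim b b.2) - G (f.optionElim b' b'.2) ≤ c := by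
  rw [Function.Embedding.optionElim_eq_swap_smul b'.2 b.2]
  exact (le_abs_self _).trans (hG _ _ _)

section extensionMean

variable {α β : Type*} [Fintype α] [Fintype β] [DecidableEq β]

/-- The conditional expectation of `G` given the values on `α`. -/
noncomputable def extensionMean (G : (Option α ↪ β) → ℝ) (f : α ↪ β) : ℝ :=
  𝔼 b : ↥(Set.range f)ᶜ, G (f.optionElim b b.2)

theorem expect_eq_expect_extensionMean (G : (Option α ↪ β) → ℝ) :
    𝔼 w, G w = 𝔼 f, extensionMean G f := by
  let e := Function.Embedding.optionEmbeddingEquiv α β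
  have hcard (f : α ↪ β) : Fintype.card ↥(Set.range f)ᶜ = Fintype.card β - Fintype.card α := by
    rw [Fintype.card_compl_set, Set.card_range_of_injective f.injective]
  refine (Fintype.expect_equiv e G (fun x => G (x.1.optionElim x.2 x.2.2)) fun w => ?_).trans
    (Fintype.expect_sigma_of_card_eq hcard _)
  exact congrArg G (e.symm_apply_apply w).symm

variable {c : ℝ≥0} {G : (Option α ↪ β) → ℝ}

theorem swapLipschitzWith_extensionMean (hG : SwapLipschitzWith c G) :
    SwapLipschitzWith c (extensionMean G) := by
  intro f a₁ a₂
  set σ := Equiv.swap a₁ a₂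
  have hmove : extensionMean G (σ • f) = 𝔼 b : ↥(Set.range f)ᶜ, G (σ • f.optionElim b b.2) := by
    refine (Fintype.expect_equiv (σ.subtypeEquiv fun x => ?_) _ _ fun b => ?_).symm
    · simp [Function.Embedding.coe_smul]
    · rw [Function.Embedding.smul_optionElim]; rfl
  rw [hmove, extensionMean, ← Finset.expect_sub_distrib]
  refine (Finset.abs_expect_le _ _).trans ?_
  obtain h | h := (univ : Finset ↥(Set.range f)ᶜ).eq_empty_or_nonempty
  · simp [h]
  · exact Finset.expect_le h fun b _ => hG _ _ _

theorem SwapLipschitzWith.expect_exp_mul_sub_expect_le_of_option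
    (ih : ∀ F : (α ↪ β) → ℝ, SwapLipschitzWith c F → ∀ t,
      𝔼 f, exp (t * (F f - 𝔼 g, F g)) ≤ exp (Fintype.card α * (c ^ 2 * t ^ 2 / 8)))
    (hG : SwapLipschitzWith c G) (t : ℝ) :
    𝔼 w, exp (t * (G w - 𝔼 w', G w')) ≤ exp (Fintype.card (Option α) * (c ^ 2 * t ^ 2 / 8)) := by
  calc 𝔼 w, exp (t * (G w - 𝔼 w', G w'))
      = 𝔼 f : α ↪ β, (𝔼 b : ↥(Set.range f)ᶜ, exp (t * (G (f.optionElim b b.2) - extensionMean G f)))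
          * exp (t * (extensionMean G f - 𝔼 g, extensionMean G g)) := by
        rw [expect_eq_expect_extensionMean, expect_eq_expect_extensionMean G]
        refine Finset.expect_congr rfl fun f _ => ?_
        rw [extensionMean, Finset.expect_mul]
        refine Finset.expect_congr rfl fun b _ => ?_
        rw [← exp_add]
        ring_nf
    _ ≤ 𝔼 f, exp (c ^ 2 * t ^ 2 / 8) * exp (t * (extensionMean G f - 𝔼 g, extensionMean G g)) := by
        gcongr with f
        exact expect_exp_mul_sub_expect_le _ (hG.sub_optionElim_le f) t
    _ = exp (c ^ 2 * t ^ 2 / 8) * 𝔼 f, exp (t * (extensionMean G f - 𝔼 g, extensionMean G g)) := by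
        rw [Finset.mul_expect]
    _ ≤ exp (c ^ 2 * t ^ 2 / 8) * exp (Fintype.card α * (c ^ 2 * t ^ 2 / 8)) := by
        gcongr
        exact ih _ (swapLipschitzWith_extensionMean hG) t
    _ = exp (Fintype.card (Option α) * (c ^ 2 * t ^ 2 / 8)) := by
        rw [← exp_add, Fintype.card_option]
        push_cast
        ring_nf

end extensionMean

theorem SwapLipschitzWith.expect_exp_mul_sub_expect_le {ι β : Type*} [Fintype ι] [Fintype β]
    [DecidableEq β] {c : ℝ≥0} {G : (ι ↪ β) → ℝ} (hG : SwapLipschitzWith c G) (t : ℝ) :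
    𝔼 u, exp (t * (G u - 𝔼 w, G w)) ≤ exp (Fintype.card ι * (c ^ 2 * t ^ 2 / 8)) := by
  refine Fintype.induction_empty_option (P := fun ι _ => ∀ G : (ι ↪ β) → ℝ,
    SwapLipschitzWith c G → ∀ t, 𝔼 u, exp (t * (G u - 𝔼 w, G w)) ≤
      exp (Fintype.card ι * (c ^ 2 * t ^ 2 / 8))) ?_ ?_ ?_ ι G hG t
  · intro α ι _ e ih G hG t
    let _ : Fintype α := Fintype.ofEquiv ι e.symm
    let E : (α ↪ β) ≃ (ι ↪ β) := e.embeddingCongr (Equiv.refl β)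
    have hGE : SwapLipschitzWith c (G ∘ E) := fun u a b => hG (E u) a b
    have hmean : 𝔼 u, (G ∘ E) u = 𝔼 w, G w := Fintype.expect_equiv E _ _ fun _ => rfl
    have := ih _ hGE t
    rw [hmean, Fintype.card_congr e] at this
    rwa [← Fintype.expect_equiv E _ _ fun _ => rfl]
  · intro G _ t
    simp
  · intro α _ ih G hG t
    exact expect_exp_mul_sub_expect_le_of_option ih hG t

theorem SwapLipschitzWith.card_le_abs_sub_expect_div_card_le {ι β : Type*} [Fintype ι]
    [Fintype β] [DecidableEq β] {c : ℝ≥0} {G : (ι ↪ β) → ℝ} (hG : SwapLipschitzWith c G)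
    {θ : ℝ} (hθ : 0 ≤ θ) (r : ℝ) :
    (#{u | r ≤ |G u - 𝔼 w, G w|} : ℝ) / Fintype.card (ι ↪ β) ≤
      2 * exp (Fintype.card ι * (c ^ 2 * θ ^ 2 / 8) - θ * r) := by
  rw [Fintype.card_filter_div_card_eq_expect]
  calc 𝔼 u, (if r ≤ |G u - 𝔼 w, G w| then 1 else 0 : ℝ)
      ≤ 𝔼 u, exp (-(θ * r)) * (exp (θ * (G u - 𝔼 w, G w))
          + exp (-θ * (G u - 𝔼 w, G w))) :=
        Finset.expect_le_expect fun u _ => ite_le_abs_le_exp_add_exp hθ r _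
    _ = exp (-(θ * r)) * (𝔼 u, exp (θ * (G u - 𝔼 w, G w))
          + 𝔼 u, exp (-θ * (G u - 𝔼 w, G w))) := by
        rw [← Finset.mul_expect, Finset.expect_add_distrib]
    _ ≤ exp (-(θ * r)) * (exp (Fintype.card ι * (c ^ 2 * θ ^ 2 / 8))
          + exp (Fintype.card ι * (c ^ 2 * (-θ) ^ 2 / 8))) := by
        gcongr <;> exact hG.expect_exp_mul_sub_expect_le _
    _ = 2 * exp (Fintype.card ι * (c ^ 2 * θ ^ 2 / 8) - θ * r) := by
        rw [neg_sq, sub_eq_neg_add, exp_add]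
        ring

theorem swapLipschitzWith_esd_submatrix {ι n : Type*} [Fintype ι] [DecidableEq ι] [DecidableEq n]
    {M : Matrix n n ℂ} (hM : M.IsHermitian) (x : ℝ) :
    SwapLipschitzWith (2 / Fintype.card ι) fun u : ι ↪ n => esd (hM.submatrix u) x := by
  intro u a b
  set s : Finset ι := {i | u i ∈ ({a, b} : Finset n)}
  have hs : #s ≤ 2 :=
    (card_le_card_of_injOn u (fun i hi => (mem_filter.1 hi).2) u.injective.injOn).trans
      card_le_two
  have hagree : ∀ i j, i ∉ s → j ∉ s → M.submatrix u u i j =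
      M.submatrix (Equiv.swap a b • u) (Equiv.swap a b • u) i j := by
    intro i j hi hj
    simp only [s, Finset.mem_filter, Finset.mem_univ, true_and, Finset.mem_insert,
      Finset.mem_singleton, not_or] at hi hj
    simp [Equiv.swap_apply_of_ne_of_ne hi.1 hi.2, Equiv.swap_apply_of_ne_of_ne hj.1 hj.2]
  refine (abs_esd_sub_esd_le _ _ hagree x).trans ?_
  push_cast
  gcongr
  exact_mod_cast hs

theorem meanESD_eq_expect {n k : ℕ} (hk : k ≤ n) (M : Matrix (Fin n) (Fin n) ℂ)
    (hM : M.IsHermitian) (x : ℝ) :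
    meanESD hk M hM x = 𝔼 u : Fin k ↪ Fin n, esd (hM.submatrix u) x := by
  have := Equiv.Perm.isMultiplyPretransitive (Fin n) k
  rw [meanESD, ← Fintype.expect_eq_sum_div_card]
  exact MulAction.expect_smul_eq_expect (Fin.castLEEmb hk) fun u => esd (hM.submatrix u) x

theorem two_mul_exp_le_six_mul_exp (k : ℕ) (r : ℝ) :
    2 * exp (k * ((2 / k) ^ 2 * (√k / √8) ^ 2 / 8) - √k / √8 * r) ≤
      6 * exp (-(r * √k) / √8) := by
  have hexponent : (k : ℝ) * ((2 / k) ^ 2 * (√k / √8) ^ 2 / 8) ≤ 1 / 16 := by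
    rw [div_pow √k, sq_sqrt (Nat.cast_nonneg k), sq_sqrt (by norm_num)]
    rcases (Nat.zero_le k).eq_or_lt with rfl | hk0
    · norm_num
    · field_simp
      norm_num
  have hexp : exp (1 / 16) ≤ 3 := by
    linarith [exp_le_exp.2 (by norm_num : (1 / 16 : ℝ) ≤ 1), exp_one_lt_d9]
  calc _ ≤ 2 * exp (1 / 16 + -(r * √k) / √8) := by
        gcongr
        linarith [show -(r * √k) / √8 = -(√k / √8 * r) by ring]
    _ ≤ 6 * exp (-(r * √k) / √8) := by
        rw [exp_add]
        nlinarith [exp_pos (-(r * √k) / √8)]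

theorem esd_pointwise_concentration_general {n k : ℕ} (hk : k ≤ n)
    (M : Matrix (Fin n) (Fin n) ℂ) (hM : M.IsHermitian) (x r : ℝ) :
    ((Finset.univ.filter fun p : Equiv.Perm (Fin n) =>
        r ≤ |fESD hk M hM p x - meanESD hk M hM x|).card : ℝ) /
        Fintype.card (Equiv.Perm (Fin n)) ≤
      6 * Real.exp (-(r * Real.sqrt k) / Real.sqrt 8) := by
  have := Equiv.Perm.isMultiplyPretransitive (Fin n) k
  have hfESD (p : Equiv.Perm (Fin n)) :
      fESD hk M hM p x = esd (hM.submatrix (p • Fin.castLEEmb hk)) x := rfl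
  simp only [hfESD]
  rw [MulAction.card_filter_smul_div_card_eq (Fin.castLEEmb hk)
    fun u => r ≤ |esd (hM.submatrix u) x - meanESD hk M hM x|, meanESD_eq_expect]
  have htail := SwapLipschitzWith.card_le_abs_sub_expect_div_card_le
    (swapLipschitzWith_esd_submatrix (ι := Fin k) hM x) (θ := √k / √8) (by positivity) r
  push_cast [Fintype.card_fin] at htail
  exact htail.trans (two_mul_exp_le_six_mul_exp k r)

/-- Pointwise concentration of the ESD of a random principal submatrix:
`P(|F_A(x) - F(x)| ≥ r) ≤ 6 exp(-r √k / √8)`. -/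
theorem esd_pointwise_concentration {n k : ℕ} (hk0 : 0 < k) (hk : k ≤ n)
    (M : Matrix (Fin n) (Fin n) ℂ) (hM : M.IsHermitian) (x r : ℝ) (hr : 0 ≤ r) :
    ((Finset.univ.filter fun p : Equiv.Perm (Fin n) =>
        r ≤ |fESD hk M hM p x - meanESD hk M hM x|).card : ℝ) /
        Fintype.card (Equiv.Perm (Fin n)) ≤
      6 * Real.exp (-(r * Real.sqrt k) / Real.sqrt 8) :=
  esd_pointwise_concentration_general hk M hM x r
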